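/- Let (B_n)_{n∈ℤ} and (C_n)_{n∈ℤ} be complex sequences with ∑_{n∈ℤ}|B_n| < ∞ and ∑_{n∈ℤ}|C_n| < ∞, let f^{LT} and f^{TL} be their far-field functions, and let G(θ) = f^{LT}(θ) f^{TL}(−θ) + f^{TL}(θ) f^{LT}(−θ). Then for every real κ > 1, ∑_{m,n∈ℤ} κ^{−|m−n|} B_m C_n = ((κ²−1)/(2π))·∫₀^{π} G(θ)/(1 − 2κ cos θ + κ²) dθ. (First identity of Lemma 1.) -/

import Mathlib

/-!
For `κ > 1` the kernel `P(θ) = (κ² - 1) / (1 - 2κ cos θ + κ²)` is the sum of two geometric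
series, `P(θ) = ∑ⱼ κ^{-|j|} e^{ijθ}`, so `∫_{-π}^{π} e^{ikθ} P(θ) dθ = 2π κ^{-|k|}`. The
denominator is even in `θ`, so the integral of `G / (1 - 2κ cos θ + κ²)` over `[0, π]` is the
integral of `f^{LT}(θ) f^{TL}(-θ) / (1 - 2κ cos θ + κ²)` over `[-π, π]`. Expanding
`f^{LT}(θ) f^{TL}(-θ) = ∑_{m,n} B_m C_n e^{i(m-n)θ}` and integrating term by term (the series are
dominated by `∑ |B_m| |C_n|`) gives the identity.
-/

open scoped Real
open Complex MeasureTheory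

noncomputable def farField (a : ℤ → ℂ) (θ : ℝ) : ℂ :=
  ∑' n : ℤ, a n * Complex.exp ((n : ℂ) * θ * Complex.I)

lemma norm_exp_int_mul_I (k : ℤ) (θ : ℝ) : ‖exp (k * θ * I)‖ = 1 := by
  simpa using norm_exp_ofReal_mul_I (k * θ)

lemma integral_exp_int_mul_I (k : ℤ) :
    ∫ θ in -π..π, exp (k * θ * I) = if k = 0 then ((2 * π : ℝ) : ℂ) else 0 := by
  split_ifs with hk
  · simp [hk, two_mul]
  · have hkI : (k : ℂ) * I ≠ 0 := by simp [hk]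
    have hperiod : exp (k * I * π) = exp (k * I * (-π : ℝ)) := by
      rw [show (k : ℂ) * I * π = k * I * (-π : ℝ) + k * (2 * π * I) by push_cast; ring,
        exp_add, exp_int_mul_two_pi_mul_I, mul_one]
    simp_rw [mul_right_comm _ _ I]
    rw [integral_exp_mul_complex hkI, hperiod, sub_self, zero_div]

lemma intervalIntegral.integral_add_comp_neg {E : Type*} [NormedAddCommGroup E]
    [NormedSpace ℝ E] {f : ℝ → E} {a : ℝ} (hf : IntervalIntegrable f volume (-a) a) :
    ∫ x in 0..a, (f x + f (-x)) = ∫ x in -a..a, f x := by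
  have h0 : (0 : ℝ) ∈ Set.uIcc (-a) a := by
    rcases le_total 0 a with h | h
    · exact Set.mem_uIcc_of_le (by linarith) h
    · exact Set.mem_uIcc_of_ge h (by linarith)
  have hfa : IntervalIntegrable f volume 0 a :=
    hf.mono_set (Set.uIcc_subset_uIcc h0 Set.right_mem_uIcc)
  have hf_a : IntervalIntegrable f volume (-a) 0 :=
    hf.mono_set (Set.uIcc_subset_uIcc Set.left_mem_uIcc h0)
  have hfneg : IntervalIntegrable (fun x => f (-x)) volume 0 a := by
    simpa using ((IntervalIntegrable.iff_comp_neg).mp hf_a).symm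
  rw [integral_add hfa hfneg, integral_comp_neg, neg_zero, add_comm,
    integral_add_adjacent_intervals hf_a hfa]

lemma intervalIntegral.hasSum_integral_of_norm_le {ι E : Type*} [Countable ι]
    [NormedAddCommGroup E] [NormedSpace ℝ E] {F : ι → ℝ → E} {f : ℝ → E} {u : ι → ℝ}
    {a b : ℝ} (hF : ∀ i, Continuous (F i)) (hu : Summable u) (hFu : ∀ i x, ‖F i x‖ ≤ u i)
    (hf : ∀ x, HasSum (fun i => F i x) (f x)) :
    HasSum (fun i => ∫ x in a..b, F i x) (∫ x in a..b, f x) :=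
  hasSum_integral_of_dominated_convergence (fun i _ => u i)
    (fun i => (hF i).aestronglyMeasurable) (fun i => .of_forall fun x _ => hFu i x)
    (.of_forall fun _ _ => hu) intervalIntegrable_const (.of_forall fun x _ => hf x)

lemma hasSum_int_geometric {K : Type*} [NormedField K] [CompleteSpace K] {z w : K}
    (hz : ‖z‖ < 1) (hw : ‖w‖ < 1) :
    HasSum (fun j : ℤ => z ^ j.toNat * w ^ (-j).toNat) ((1 - z * w) / ((1 - z) * (1 - w))) := by
  have hz1 : 1 - z ≠ 0 := fun h => by simp [← sub_eq_zero.1 h] at hz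
  have hw1 : 1 - w ≠ 0 := fun h => by simp [← sub_eq_zero.1 h] at hw
  have hpos : HasSum (fun n : ℕ => z ^ n) (1 - z)⁻¹ := hasSum_geometric_of_norm_lt_one hz
  have hneg : HasSum (fun n : ℕ => w ^ (n + 1)) (w * (1 - w)⁻¹) := by
    simpa [pow_succ'] using (hasSum_geometric_of_norm_lt_one hw).mul_left w
  have h := HasSum.of_nat_of_neg_add_one (f := fun j : ℤ => z ^ j.toNat * w ^ (-j).toNat)
    (by simpa using hpos) (hneg.congr_fun fun n => ?_)
  · convert h using 1
    field_simp
    ring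
  · rw [Int.toNat_eq_zero.2 (by omega), neg_neg, Int.toNat_natCast_add_one, pow_zero, one_mul]

lemma zpow_eq_pow_toNat_mul_inv_pow_toNat_neg {G₀ : Type*} [GroupWithZero G₀] (x : G₀) (j : ℤ) :
    x ^ j = x ^ j.toNat * x⁻¹ ^ (-j).toNat := by
  obtain ⟨n, rfl | rfl⟩ := Int.eq_nat_or_neg j <;> simp

lemma zpow_neg_natAbs {G₀ : Type*} [GroupWithZero G₀] (x : G₀) (j : ℤ) :
    x ^ (-(j.natAbs : ℤ)) = x⁻¹ ^ j.toNat * x⁻¹ ^ (-j).toNat := by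
  rw [← pow_add, Int.toNat_add_toNat_neg_eq_natAbs, zpow_neg, zpow_natCast, inv_pow]

/-- The Poisson kernel `(1 - r²) / (1 - 2 r cos θ + r²)` of the unit disc at radius `r = κ⁻¹`
(Mathlib's `poissonKernel 0 (exp (θ * I)) κ`). -/
noncomputable def circlePoissonKernel (κ θ : ℝ) : ℝ :=
  (κ ^ 2 - 1) / (1 - 2 * κ * Real.cos θ + κ ^ 2)

lemma sub_one_sq_le_one_sub_two_mul_cos_add_sq {κ : ℝ} (hκ : 0 ≤ κ) (θ : ℝ) :
    (κ - 1) ^ 2 ≤ 1 - 2 * κ * Real.cos θ + κ ^ 2 := by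
  nlinarith [Real.cos_le_one θ]

lemma one_sub_two_mul_cos_add_sq_pos {κ : ℝ} (hκ : 1 < κ) (θ : ℝ) :
    0 < 1 - 2 * κ * Real.cos θ + κ ^ 2 :=
  lt_of_lt_of_le (by nlinarith) (sub_one_sq_le_one_sub_two_mul_cos_add_sq (by linarith) θ)

lemma continuous_circlePoissonKernel {κ : ℝ} (hκ : 1 < κ) : Continuous (circlePoissonKernel κ) :=
  continuous_const.div (by fun_prop) fun θ => (one_sub_two_mul_cos_add_sq_pos hκ θ).ne'

lemma abs_circlePoissonKernel_le {κ : ℝ} (hκ : 1 < κ) (θ : ℝ) :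
    |circlePoissonKernel κ θ| ≤ (κ ^ 2 - 1) / (κ - 1) ^ 2 := by
  have hnum : 0 ≤ κ ^ 2 - 1 := by nlinarith
  rw [circlePoissonKernel,
    abs_of_nonneg (div_nonneg hnum (one_sub_two_mul_cos_add_sq_pos hκ θ).le)]
  exact div_le_div_of_nonneg_left hnum (by nlinarith)
    (sub_one_sq_le_one_sub_two_mul_cos_add_sq (by linarith) θ)

lemma hasSum_circlePoissonKernel {κ : ℝ} (hκ : 1 < κ) (θ : ℝ) :
    HasSum (fun j : ℤ => ((κ ^ (-(j.natAbs : ℤ)) : ℝ) : ℂ) * exp (j * θ * I))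
      (circlePoissonKernel κ θ) := by
  set e := exp (θ * I)
  have he : ‖e‖ = 1 := norm_exp_ofReal_mul_I θ
  have hκ0 : (κ : ℂ) ≠ 0 := by exact_mod_cast (by linarith : κ ≠ 0)
  have hκnorm : ‖(κ : ℂ)‖ = κ := by simp [abs_of_pos (by linarith : 0 < κ)]
  have hz : ‖e / κ‖ < 1 := by
    rw [norm_div, he, hκnorm]; exact (div_lt_one (by linarith)).2 hκ
  have hw : ‖e⁻¹ / κ‖ < 1 := by
    rw [norm_div, norm_inv, he, hκnorm, inv_one]; exact (div_lt_one (by linarith)).2 hκ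
  have hD : ((1 - 2 * κ * Real.cos θ + κ ^ 2 : ℝ) : ℂ) ≠ 0 := by
    exact_mod_cast (one_sub_two_mul_cos_add_sq_pos hκ θ).ne'
  have hcos : 2 * Complex.cos θ = e + e⁻¹ := by
    rw [two_cos, ← exp_neg, neg_mul]
  have hsum : (1 - e / κ * (e⁻¹ / κ)) / ((1 - e / κ) * (1 - e⁻¹ / κ))
      = circlePoissonKernel κ θ := by
    have he0 : e ≠ 0 := exp_ne_zero _
    have hnum : 1 - e / κ * (e⁻¹ / κ) = ((κ ^ 2 - 1 : ℝ) : ℂ) / κ ^ 2 := by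
      push_cast; field_simp
    have hden : (1 - e / κ) * (1 - e⁻¹ / κ)
        = ((1 - 2 * κ * Real.cos θ + κ ^ 2 : ℝ) : ℂ) / κ ^ 2 := by
      push_cast; field_simp; linear_combination κ * e * hcos + κ * mul_inv_cancel₀ he0
    rw [hnum, hden, div_div_div_cancel_right₀ (pow_ne_zero 2 hκ0), circlePoissonKernel,
      Complex.ofReal_div]
  refine hsum ▸ (hasSum_int_geometric hz hw).congr_fun fun j => ?_
  rw [mul_comm, mul_assoc, exp_int_mul, zpow_eq_pow_toNat_mul_inv_pow_toNat_neg,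
    Complex.ofReal_zpow, zpow_neg_natAbs]
  simp only [div_eq_mul_inv, mul_pow]
  ring

lemma summable_zpow_neg_natAbs {κ : ℝ} (hκ : 1 < κ) :
    Summable fun j : ℤ => κ ^ (-(j.natAbs : ℤ)) := by
  have hκ' : ‖κ⁻¹‖ < 1 := by
    rw [norm_inv, Real.norm_of_nonneg (by linarith)]; exact inv_lt_one_of_one_lt₀ hκ
  simpa only [zpow_neg_natAbs] using (hasSum_int_geometric hκ' hκ').summable

lemma integral_exp_int_mul_I_mul_circlePoissonKernel {κ : ℝ} (hκ : 1 < κ) (k : ℤ) :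
    ∫ θ in -π..π, exp (k * θ * I) * circlePoissonKernel κ θ
      = 2 * π * ((κ ^ (-(k.natAbs : ℤ)) : ℝ) : ℂ) := by
  have h := intervalIntegral.hasSum_integral_of_norm_le (a := -π) (b := π)
    (F := fun (j : ℤ) θ =>
      exp (k * θ * I) * (((κ ^ (-(j.natAbs : ℤ)) : ℝ) : ℂ) * exp (j * θ * I)))
    (fun j => by fun_prop) (summable_zpow_neg_natAbs hκ)
    (fun j θ => by simp [norm_exp_int_mul_I, abs_of_pos (by linarith : 0 < κ)])
    (fun θ => (hasSum_circlePoissonKernel hκ θ).mul_left _)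
  refine h.unique ((hasSum_ite_eq (-k) _).congr_fun fun j => ?_)
  have hexp : ∀ θ : ℝ, exp (k * θ * I) * (((κ ^ (-(j.natAbs : ℤ)) : ℝ) : ℂ) * exp (j * θ * I))
      = ((κ ^ (-(j.natAbs : ℤ)) : ℝ) : ℂ) * exp ((j + k : ℤ) * θ * I) := by
    intro θ; rw [mul_left_comm, ← exp_add]; push_cast; ring_nf
  simp_rw [hexp]
  rw [intervalIntegral.integral_const_mul, integral_exp_int_mul_I]
  rcases eq_or_ne j (-k) with rfl | hj
  · simp [mul_comm]
  · simp [hj, show j + k ≠ 0 by omega]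

section farField

variable {a b : ℤ → ℂ}

lemma summable_norm_farField_term (ha : Summable fun n => ‖a n‖) (θ : ℝ) :
    Summable fun n : ℤ => ‖a n * exp (n * θ * I)‖ := by
  simpa only [norm_mul, norm_exp_int_mul_I, mul_one] using ha

lemma hasSum_farField (ha : Summable fun n => ‖a n‖) (θ : ℝ) :
    HasSum (fun n : ℤ => a n * exp (n * θ * I)) (farField a θ) :=
  (summable_norm_farField_term ha θ).of_norm.hasSum

lemma continuous_farField (ha : Summable fun n => ‖a n‖) : Continuous (farField a) :=
  continuous_tsum (fun n => by fun_prop) ha fun n θ => by simp [norm_exp_int_mul_I]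

lemma hasSum_farField_mul_farField_neg (ha : Summable fun n => ‖a n‖)
    (hb : Summable fun n => ‖b n‖) (θ : ℝ) :
    HasSum (fun p : ℤ × ℤ => a p.1 * b p.2 * exp ((p.1 - p.2 : ℤ) * θ * I))
      (farField a θ * farField b (-θ)) := by
  have hprod := summable_mul_of_summable_norm
    (summable_norm_farField_term ha θ) (summable_norm_farField_term hb (-θ))
  refine ((hasSum_farField ha θ).mul (hasSum_farField hb (-θ)) hprod).congr_fun fun p => ?_
  rw [mul_mul_mul_comm, ← exp_add]
  push_cast
  ring_nf

lemma integral_farField_mul_farField_neg_mul_circlePoissonKernel (ha : Summable fun n => ‖a n‖)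
    (hb : Summable fun n => ‖b n‖) {κ : ℝ} (hκ : 1 < κ) :
    ∫ θ in -π..π, farField a θ * farField b (-θ) * circlePoissonKernel κ θ
      = 2 * π * ∑' p : ℤ × ℤ, ((κ ^ (-((p.1 - p.2).natAbs : ℤ)) : ℝ) : ℂ) * a p.1 * b p.2 := by
  have h := intervalIntegral.hasSum_integral_of_norm_le (a := -π) (b := π)
    (F := fun (p : ℤ × ℤ) θ => a p.1 * b p.2 * exp ((p.1 - p.2 : ℤ) * θ * I)
      * circlePoissonKernel κ θ)
    (u := fun p => ‖a p.1‖ * ‖b p.2‖ * ((κ ^ 2 - 1) / (κ - 1) ^ 2))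
    (fun p => by have := continuous_circlePoissonKernel hκ; fun_prop)
    ((ha.mul_of_nonneg hb (fun _ => norm_nonneg _) (fun _ => norm_nonneg _)).mul_right _)
    (fun p θ => by
      simp only [norm_mul, norm_exp_int_mul_I, mul_one, Complex.norm_real, Real.norm_eq_abs]
      gcongr
      exact abs_circlePoissonKernel_le hκ θ)
    (fun θ => (hasSum_farField_mul_farField_neg ha hb θ).mul_right _)
  rw [← h.tsum_eq, ← tsum_mul_left]
  congr 1 with p
  simp_rw [mul_assoc (a p.1 * b p.2)]
  rw [intervalIntegral.integral_const_mul, integral_exp_int_mul_I_mul_circlePoissonKernel hκ]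
  ring

end farField

/-- First identity of Lemma 1: for absolutely summable sequences `B, C` with far-field
functions `f^{LT}, f^{TL}`, and `G(θ) = f^{LT}(θ) f^{TL}(-θ) + f^{TL}(θ) f^{LT}(-θ)`,
one has, for every `κ > 1`,
`∑_{m,n} κ^{-|m-n|} B_m C_n = ((κ²-1)/(2π)) ∫₀^π G(θ)/(1 - 2κ cos θ + κ²) dθ`. -/
theorem lemma1_first_identity (B C : ℤ → ℂ)
    (hB : Summable fun n : ℤ => ‖B n‖) (hC : Summable fun n : ℤ => ‖C n‖)
    (fLT fTL : ℝ → ℂ) (hfLT : fLT = farField B) (hfTL : fTL = farField C)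
    (G : ℝ → ℂ) (hG : ∀ θ : ℝ, G θ = fLT θ * fTL (-θ) + fTL θ * fLT (-θ))
    (κ : ℝ) (hκ : 1 < κ) :
    ∑' p : ℤ × ℤ, ((κ ^ (-((p.1 - p.2).natAbs : ℤ)) : ℝ) : ℂ) * B p.1 * C p.2
      = (((κ ^ 2 - 1) / (2 * π) : ℝ) : ℂ)
        * ∫ θ in (0 : ℝ)..π, G θ / ((1 - 2 * κ * Real.cos θ + κ ^ 2 : ℝ) : ℂ) := by
  subst hfLT hfTL
  set h : ℝ → ℂ := fun θ =>
    farField B θ * farField C (-θ) / ((1 - 2 * κ * Real.cos θ + κ ^ 2 : ℝ) : ℂ)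
  have hGh : ∀ θ, G θ / ((1 - 2 * κ * Real.cos θ + κ ^ 2 : ℝ) : ℂ) = h θ + h (-θ) := fun θ => by
    simp only [h, hG, add_div, neg_neg, Real.cos_neg, mul_comm (farField C θ)]
  have hh : Continuous h :=
    ((continuous_farField hB).mul ((continuous_farField hC).comp continuous_neg)).div
      (by fun_prop) fun θ => by exact_mod_cast (one_sub_two_mul_cos_add_sq_pos hκ θ).ne'
  have hπ : (π : ℂ) ≠ 0 := by exact_mod_cast Real.pi_ne_zero
  calc _ = (2 * π : ℂ)⁻¹
        * ∫ θ in -π..π, farField B θ * farField C (-θ) * circlePoissonKernel κ θ := by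
        rw [integral_farField_mul_farField_neg_mul_circlePoissonKernel hB hC hκ]
        field_simp
    _ = _ := by
        simp_rw [hGh]
        rw [intervalIntegral.integral_add_comp_neg (hh.intervalIntegrable _ _),
          ← intervalIntegral.integral_const_mul, ← intervalIntegral.integral_const_mul]
        congr 1 with θ
        simp only [h, circlePoissonKernel]
        push_cast
        ring
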